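/- arXiv:2006.06865 — 2 statements merged into one kernel-verified Lean document; each statement's English description precedes it below -/
import Mathlib

section
/- For any directed graph G on vertex set N = {1, …, N}, any partition of N into disjoint groups N_1, …, N_C, any budget I, failure budget J, and fairness level W ∈ [0,1], the following two optimization problems have the same optimal value (with the convention that a supremum over an empty set equals −∞, values taken in ℝ ∪ {−∞}): (P1) the supremum, over x ∈ X satisfying F_{G,c}(x, ξ) ≥ W·|N_c| for every group c and every ξ ∈ Ξ, of min_{ξ ∈ Ξ} Σ_{c} F_{G,c}(x, ξ); and (P2) the supremum over x ∈ X of min_{ξ ∈ Ξ} of the supremum of Σ_{n ∈ N} y_n over all y ∈ {0,1}^N satisfying Σ_{n ∈ N_c} y_n ≥ W·|N_c| for every group c and y_n ≤ Σ_{ν ∈ δ(n)} ξ_ν x_ν for every vertex n. -/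
/-! Once `x` and `ξ` are fixed, the best covering scheme `y` of (P2) is the set of all covered
vertices: it dominates every admissible `y`, so (P2)'s inner supremum is the number of covered
vertices when that set meets the fairness bounds, and `−∞` otherwise. Because the groups
partition the vertices, that number is `∑ c, F_{G,c}(x, ξ)`. A single infeasible scenario `ξ`
therefore drives the minimum over `Ξ` to `−∞`, so the monitor choices that count in (P2) are
exactly the fair ones of (P1). -/

open Finset
open scoped Classical

/-- Vertex `n` is covered by monitor set `S` under availability `A`: some in-neighbor of
`n` (w.r.t. the directed edge relation `E`, where `E ν n` means `(ν, n) ∈ E`) is a chosen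
monitor and is available. -/
def cov {N : ℕ} (E : Fin N → Fin N → Prop) (S A : Finset (Fin N)) (n : Fin N) : Prop :=
  ∃ ν, E ν n ∧ ν ∈ S ∧ ν ∈ A

/-- `F_{G,c}`: the number of covered vertices in the group `grp`. -/
noncomputable def Fgc {N : ℕ} (E : Fin N → Fin N → Prop) (S A : Finset (Fin N))
    (grp : Finset (Fin N)) : ℕ :=
  (grp.filter (cov E S A)).card

theorem Finset.sum_card_filter_of_partition {ι α : Type*} [Fintype ι] [Fintype α]
    [DecidableEq α] (groups : ι → Finset α)
    (hdisj : Pairwise fun c c' => Disjoint (groups c) (groups c'))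
    (hcover : univ.biUnion groups = univ) (p : α → Prop) :
    ∑ c, #((groups c).filter p) = #(univ.filter p) := by
  rw [← hcover, filter_biUnion,
    card_biUnion fun c _ c' _ hcc => disjoint_filter_filter (hdisj hcc)]

theorem iInf_iSup_prop {α ι : Type*} [CompleteLattice α] (p : ι → Prop) (f : ι → α) :
    ⨅ i, ⨆ _ : p i, f i = ⨆ _ : ∀ i, p i, ⨅ i, f i := by
  by_cases h : ∀ i, p i
  · rw [iSup_pos h]
    exact iInf_congr fun i => iSup_pos (h i)
  · obtain ⟨i, hi⟩ := not_forall.1 h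
    rw [iSup_neg h, eq_bot_iff]
    exact (iInf_le _ i).trans (iSup_neg hi).le

theorem iSup_card_fair_subset_eq_filter {ι α : Type*} [Fintype α] [DecidableEq α]
    (groups : ι → Finset α) (W : ℝ) (p : α → Prop) :
    ⨆ Y : {Y : Finset α //
        (∀ c, W * #(groups c) ≤ (#(Y ∩ groups c) : ℝ)) ∧ ∀ a ∈ Y, p a},
      ((#Y.1 : ℝ) : EReal) =
    ⨆ _ : ∀ c, W * #(groups c) ≤ (#((groups c).filter p) : ℝ),
      ((#(univ.filter p) : ℝ) : EReal) := by
  have htrace : ∀ c, univ.filter p ∩ groups c = (groups c).filter p := fun c => by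
    rw [filter_inter, univ_inter]
  apply le_antisymm
  · refine iSup_le fun ⟨Y, hfair, hp⟩ => ?_
    have hsub : Y ⊆ univ.filter p := fun a ha => mem_filter.2 ⟨mem_univ a, hp a ha⟩
    have hfair' : ∀ c, W * #(groups c) ≤ (#((groups c).filter p) : ℝ) := fun c =>
      (hfair c).trans <| by
        rw [← htrace]
        exact_mod_cast card_le_card (inter_subset_inter_right hsub)
    rw [iSup_pos hfair']
    exact_mod_cast card_le_card hsub
  · refine iSup_le fun hfair => le_iSup_of_le
      ⟨univ.filter p, fun c => htrace c ▸ hfair c, fun a ha => (mem_filter.1 ha).2⟩ le_rfl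

/-- Monitor choices `x ∈ X` are encoded as finsets `S` with `|S| ≤ I`, availability scenarios
`ξ ∈ Ξ` as finsets `A` with `|univ \ A| ≤ J`, and covering schemes `y ∈ {0,1}^N` as finsets
`Y`; `EReal` supplies `⊥ = −∞` as the supremum of an empty set. -/
theorem stmt_1_general (N C I J : ℕ) (E : Fin N → Fin N → Prop)
    (groups : Fin C → Finset (Fin N))
    (hdisj : Pairwise fun c c' => Disjoint (groups c) (groups c'))
    (hcover : Finset.univ.biUnion groups = Finset.univ)
    (W : ℝ) :
    (⨆ S : {S : Finset (Fin N) // S.card ≤ I ∧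
        ∀ A : Finset (Fin N), (Finset.univ \ A).card ≤ J →
          ∀ c, W * (groups c).card ≤ (Fgc E S A (groups c) : ℝ)},
      ⨅ A : {A : Finset (Fin N) // (Finset.univ \ A).card ≤ J},
        (((∑ c, Fgc E S.1 A.1 (groups c) : ℕ) : ℝ) : EReal)) =
    (⨆ S : {S : Finset (Fin N) // S.card ≤ I},
      ⨅ A : {A : Finset (Fin N) // (Finset.univ \ A).card ≤ J},
        ⨆ Y : {Y : Finset (Fin N) //
            (∀ c, W * (groups c).card ≤ ((Y ∩ groups c).card : ℝ)) ∧
            ∀ n ∈ Y, cov E S.1 A.1 n},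
          (((Y.1.card : ℕ) : ℝ) : EReal)) := by
  have hcount : ∀ S A, ∑ c, Fgc E S A (groups c) = #(univ.filter (cov E S A)) :=
    fun S A => sum_card_filter_of_partition groups hdisj hcover _
  simp_rw [iSup_card_fair_subset_eq_filter, iInf_iSup_prop, hcount, iSup_subtype, iSup_and]
  simp only [Fgc, Subtype.forall]

/-- the robust covering problem with fairness constraints (P1) and its
two-stage reformulation with a fictitious counting stage (P2) have the same optimal
value in `ℝ ∪ {−∞}` (formalized in `EReal`; a supremum over an empty set is `⊥ = −∞`).
Monitor choices `x ∈ X` are encoded as finsets `S` with `|S| ≤ I`, availability scenarios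
`ξ ∈ Ξ` as finsets `A` with `|univ \ A| ≤ J`, and covering schemes `y ∈ {0,1}^N` as
finsets `Y` (so `∑ n, y n = |Y|`, and `y_n ≤ ∑_{ν ∈ δ(n)} ξ_ν x_ν` means every `n ∈ Y`
is covered). -/
theorem stmt_1 (N C I J : ℕ) (E : Fin N → Fin N → Prop)
    (groups : Fin C → Finset (Fin N))
    (hdisj : Pairwise fun c c' => Disjoint (groups c) (groups c'))
    (hcover : Finset.univ.biUnion groups = Finset.univ)
    (W : ℝ) (hW0 : 0 ≤ W) (hW1 : W ≤ 1) :
    (⨆ S : {S : Finset (Fin N) // S.card ≤ I ∧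
        ∀ A : Finset (Fin N), (Finset.univ \ A).card ≤ J →
          ∀ c, W * (groups c).card ≤ (Fgc E S A (groups c) : ℝ)},
      ⨅ A : {A : Finset (Fin N) // (Finset.univ \ A).card ≤ J},
        (((∑ c, Fgc E S.1 A.1 (groups c) : ℕ) : ℝ) : EReal)) =
    (⨆ S : {S : Finset (Fin N) // S.card ≤ I},
      ⨅ A : {A : Finset (Fin N) // (Finset.univ \ A).card ≤ J},
        ⨆ Y : {Y : Finset (Fin N) //
            (∀ c, W * (groups c).card ≤ ((Y ∩ groups c).card : ℝ)) ∧
            ∀ n ∈ Y, cov E S.1 A.1 n},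
          (((Y.1.card : ℕ) : ℝ) : EReal)) :=
  stmt_1_general N C I J E groups hdisj hcover W
end

section
/- Suppose T ⊆ ℝ^N is upward closed, i.e., for all ξ ∈ T ∩ [0,1]^N and all ξ′ ∈ [0,1]^N with ξ′ ≥ ξ componentwise, ξ′ ∈ T. Then for every x ∈ {0,1}^N, every K-tuple y = (y^1, …, y^K) of vectors in {0,1}^N, and every ℓ ∈ L = {0, 1, …, N}^K, the integral parameterized uncertainty set Ξ(x, y, ℓ) is empty if and only if the relaxed set Ξ̄(x, y, ℓ) is empty. Consequently, the partitioned K-adaptability problem — maximize over x ∈ X and y^1, …, y^K ∈ Y the value min over ℓ ∈ L and ξ ∈ Ξ(x, y, ℓ) of max over k with ℓ_k = 0 of Σ_{n ∈ N} y^k_n — has the same optimal value when Ξ(x, y, ℓ) is replaced by Ξ̄(x, y, ℓ) throughout (with the conventions that a maximum over an empty index set is −∞ and a minimum over an empty domain is +∞). -/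
open Finset
open scoped Classical

noncomputable section

/-- The polyhedron `T = {ξ ∈ ℝ^N : Aξ ≥ b}`. -/
def TSet {N R : ℕ} (A : Fin R → Fin N → ℝ) (b : Fin R → ℝ) : Set (Fin N → ℝ) :=
  {ξ | ∀ r, b r ≤ ∑ n, A r n * ξ n}

/-- The integral parameterized uncertainty set `Ξ(x, y, ℓ)`. The index vector
`ℓ ∈ {0, 1, …, N}^K` is encoded as `ℓ : Fin K → Option (Fin N)` (`none` plays the role of
the value `0`); `E ν n` means there is a directed edge `(ν, n)`, so `δ(n) = {ν : E ν n}`. -/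
def XiInt {N R K : ℕ} (E : Fin N → Fin N → Prop)
    (A : Fin R → Fin N → ℝ) (b : Fin R → ℝ)
    (x : Fin N → ℝ) (y : Fin K → Fin N → ℝ) (ℓ : Fin K → Option (Fin N)) :
    Set (Fin N → ℝ) :=
  {ξ | (∀ n, ξ n = 0 ∨ ξ n = 1) ∧ ξ ∈ TSet A b ∧
    (∀ k, ∀ m, ℓ k = some m →
      (∑ ν ∈ Finset.univ.filter (fun ν => E ν m), ξ ν * x ν) + 1 ≤ y k m) ∧
    (∀ k, ℓ k = none → ∀ n,
      y k n ≤ ∑ ν ∈ Finset.univ.filter (fun ν => E ν n), ξ ν * x ν)}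

/-- The relaxed parameterized uncertainty set `Ξ̄(x, y, ℓ)`, where `ξ` ranges over
`[0,1]^N ∩ T` instead of `{0,1}^N ∩ T`. -/
def XiRel {N R K : ℕ} (E : Fin N → Fin N → Prop)
    (A : Fin R → Fin N → ℝ) (b : Fin R → ℝ)
    (x : Fin N → ℝ) (y : Fin K → Fin N → ℝ) (ℓ : Fin K → Option (Fin N)) :
    Set (Fin N → ℝ) :=
  {ξ | (∀ n, 0 ≤ ξ n ∧ ξ n ≤ 1) ∧ ξ ∈ TSet A b ∧
    (∀ k, ∀ m, ℓ k = some m →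
      (∑ ν ∈ Finset.univ.filter (fun ν => E ν m), ξ ν * x ν) + 1 ≤ y k m) ∧
    (∀ k, ℓ k = none → ∀ n,
      y k n ≤ ∑ ν ∈ Finset.univ.filter (fun ν => E ν n), ξ ν * x ν)}

/-- The optimal value (in `EReal`) of the partitioned K-adaptability problem with
parameterized uncertainty sets `Ξsel`: maximize over binary `x ∈ X` and binary
`y¹, …, y^K ∈ Y` the value `min_{ℓ ∈ L} min_{ξ ∈ Ξsel(x,y,ℓ)} max_{k : ℓ_k = 0} ∑_n y^k_n`
(maximum over an empty index set is `⊥ = −∞`, minimum over an empty domain is `⊤ = +∞`,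
supremum over an empty feasible region is `⊥ = −∞`). -/
def kAdaptVal {N K : ℕ}
    (Ξsel : (Fin N → ℝ) → (Fin K → Fin N → ℝ) → (Fin K → Option (Fin N)) → Set (Fin N → ℝ))
    (I : ℕ) {C : ℕ} (groups : Fin C → Finset (Fin N)) (W : ℝ) : EReal :=
  ⨆ x : {x : Fin N → ℝ // (∀ n, x n = 0 ∨ x n = 1) ∧ (∑ n, x n) ≤ I},
  ⨆ y : {y : Fin K → Fin N → ℝ // ∀ k, (∀ n, y k n = 0 ∨ y k n = 1) ∧
      ∀ c, W * (groups c).card ≤ ∑ n ∈ groups c, y k n},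
  ⨅ ℓ : Fin K → Option (Fin N),
  ⨅ _ : (Ξsel x.1 y.1 ℓ),
  ⨆ k : {k : Fin K // ℓ k = none}, (((∑ n, y.1 k.1 n : ℝ)) : EReal)

/-! Rounding every positive coordinate of a relaxed scenario `ξ ∈ Ξ̄(x, y, ℓ)` up to `1` gives a
binary scenario in `Ξ(x, y, ℓ)`. It stays in `T` by upward closure; since `x ≥ 0`, rounding up can
only increase the right-hand sides of the constraints `yᵏₙ ≤ ∑_{ν ∈ δ(n)} ξ_ν x_ν`; and a constraint
`∑_{ν ∈ δ(m)} ξ_ν x_ν + 1 ≤ yᵏₘ ≤ 1` forces every term `ξ_ν x_ν` to vanish, which rounding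
preserves because it keeps zero coordinates at zero. The objective of the K-adaptability problem
sees `Ξ(x, y, ℓ)` only through whether it is empty, so both problems have the same value. -/

section RoundUp

variable {ι : Type*}

def roundUp (ξ : ι → ℝ) : ι → ℝ := fun n => if ξ n = 0 then 0 else 1

theorem roundUp_eq_zero_or_eq_one (ξ : ι → ℝ) (n : ι) : roundUp ξ n = 0 ∨ roundUp ξ n = 1 := by
  unfold roundUp
  split_ifs <;> simp

theorem roundUp_mem_Icc (ξ : ι → ℝ) (n : ι) : roundUp ξ n ∈ Set.Icc 0 1 := by
  rcases roundUp_eq_zero_or_eq_one ξ n with h | h <;> simp [h]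

theorem le_roundUp {ξ : ι → ℝ} (hξ : ∀ n, ξ n ≤ 1) (n : ι) : ξ n ≤ roundUp ξ n := by
  unfold roundUp
  split_ifs with h
  · exact h.le
  · exact hξ n

theorem sum_roundUp_mul_eq_zero {s : Finset ι} {ξ x : ι → ℝ} (hξ : ∀ n, 0 ≤ ξ n)
    (hx : ∀ n, 0 ≤ x n) (h : ∑ ν ∈ s, ξ ν * x ν = 0) : ∑ ν ∈ s, roundUp ξ ν * x ν = 0 := by
  rw [Finset.sum_eq_zero_iff_of_nonneg fun ν _ => mul_nonneg (hξ ν) (hx ν)] at h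
  refine Finset.sum_eq_zero fun ν hν => ?_
  rcases mul_eq_zero.mp (h ν hν) with h0 | h0 <;> simp [roundUp, h0]

end RoundUp

def IsUpwardClosedInUnitCube {ι : Type*} (T : Set (ι → ℝ)) : Prop :=
  ∀ ξ ∈ T, (∀ n, 0 ≤ ξ n ∧ ξ n ≤ 1) →
    ∀ ξ' : ι → ℝ, (∀ n, 0 ≤ ξ' n ∧ ξ' n ≤ 1) → (∀ n, ξ n ≤ ξ' n) → ξ' ∈ T

section Uncertainty

variable {N R K : ℕ} {E : Fin N → Fin N → Prop} {A : Fin R → Fin N → ℝ} {b : Fin R → ℝ}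
  {x : Fin N → ℝ} {y : Fin K → Fin N → ℝ} {ℓ : Fin K → Option (Fin N)}

theorem XiInt_subset_XiRel : XiInt E A b x y ℓ ⊆ XiRel E A b x y ℓ := by
  rintro ξ ⟨hbin, hT, hsome, hnone⟩
  refine ⟨fun n => ?_, hT, hsome, hnone⟩
  rcases hbin n with h | h <;> simp [h]

theorem roundUp_mem_XiInt
    (hup : IsUpwardClosedInUnitCube (TSet A b))
    (hx : ∀ n, 0 ≤ x n) (hy : ∀ k n, y k n ≤ 1) {ξ : Fin N → ℝ}
    (hξ : ξ ∈ XiRel E A b x y ℓ) : roundUp ξ ∈ XiInt E A b x y ℓ := by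
  obtain ⟨hbox, hT, hsome, hnone⟩ := hξ
  have hle : ∀ n, ξ n ≤ roundUp ξ n := le_roundUp fun n => (hbox n).2
  refine ⟨roundUp_eq_zero_or_eq_one ξ, hup ξ hT hbox _ (roundUp_mem_Icc ξ) hle, ?_, ?_⟩
  · intro k m hk
    have hnonneg : 0 ≤ ∑ ν ∈ univ.filter (fun ν => E ν m), ξ ν * x ν :=
      Finset.sum_nonneg fun ν _ => mul_nonneg (hbox ν).1 (hx ν)
    have hzero : ∑ ν ∈ univ.filter (fun ν => E ν m), ξ ν * x ν = 0 := by
      linarith [hsome k m hk, hy k m]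
    rw [sum_roundUp_mul_eq_zero (fun n => (hbox n).1) hx hzero]
    simpa [hzero] using hsome k m hk
  · intro k hk n
    calc y k n ≤ ∑ ν ∈ univ.filter (fun ν => E ν n), ξ ν * x ν := hnone k hk n
      _ ≤ ∑ ν ∈ univ.filter (fun ν => E ν n), roundUp ξ ν * x ν :=
        Finset.sum_le_sum fun ν _ => mul_le_mul_of_nonneg_right (hle ν) (hx ν)

theorem XiInt_nonempty_iff_XiRel_nonempty
    (hup : IsUpwardClosedInUnitCube (TSet A b))
    (hx : ∀ n, 0 ≤ x n) (hy : ∀ k n, y k n ≤ 1) :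
    (XiInt E A b x y ℓ).Nonempty ↔ (XiRel E A b x y ℓ).Nonempty :=
  ⟨fun h => h.mono XiInt_subset_XiRel,
    fun ⟨ξ, hξ⟩ => ⟨roundUp ξ, roundUp_mem_XiInt hup hx hy hξ⟩⟩

end Uncertainty

theorem iInf_const_eq_of_nonempty_iff {α : Type*} [CompleteLattice α] {ι κ : Sort*}
    (h : Nonempty ι ↔ Nonempty κ) (c : α) : ⨅ _ : ι, c = ⨅ _ : κ, c := by
  by_cases hι : Nonempty ι
  · have := h.mp hι
    simp only [iInf_const]
  · have : IsEmpty ι := not_nonempty_iff.mp hι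
    have : IsEmpty κ := not_nonempty_iff.mp (h.not.mp hι)
    simp only [iInf_of_empty]

theorem kAdaptVal_congr_of_nonempty_iff {N K I C : ℕ}
    {Ξ₁ Ξ₂ : (Fin N → ℝ) → (Fin K → Fin N → ℝ) → (Fin K → Option (Fin N)) → Set (Fin N → ℝ)}
    {groups : Fin C → Finset (Fin N)} {W : ℝ}
    (h : ∀ x y ℓ, (∀ n, x n = 0 ∨ x n = 1) → (∀ k n, y k n = 0 ∨ y k n = 1) →
      ((Ξ₁ x y ℓ).Nonempty ↔ (Ξ₂ x y ℓ).Nonempty)) :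
    kAdaptVal Ξ₁ I groups W = kAdaptVal Ξ₂ I groups W := by
  unfold kAdaptVal
  refine iSup_congr fun x => iSup_congr fun y => iInf_congr fun ℓ => ?_
  refine iInf_const_eq_of_nonempty_iff ?_ _
  simpa only [Set.nonempty_coe_sort] using h x.1 y.1 ℓ x.2.1 fun k => (y.2 k).1

/-- if the polyhedron `T` is upward closed (within `[0,1]^N`), then for all
binary `x`, `y` and every `ℓ`, the integral set `Ξ(x,y,ℓ)` is empty iff the relaxed set
`Ξ̄(x,y,ℓ)` is empty; consequently the partitioned K-adaptability problem has the same
optimal value with `Ξ` replaced by `Ξ̄` throughout. -/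
theorem stmt_3 (N R K I C : ℕ) (E : Fin N → Fin N → Prop)
    (A : Fin R → Fin N → ℝ) (b : Fin R → ℝ)
    (groups : Fin C → Finset (Fin N)) (W : ℝ)
    (hup : ∀ ξ ∈ TSet A b, (∀ n, 0 ≤ ξ n ∧ ξ n ≤ 1) →
      ∀ ξ' : Fin N → ℝ, (∀ n, 0 ≤ ξ' n ∧ ξ' n ≤ 1) → (∀ n, ξ n ≤ ξ' n) →
        ξ' ∈ TSet A b) :
    (∀ (x : Fin N → ℝ) (y : Fin K → Fin N → ℝ) (ℓ : Fin K → Option (Fin N)),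
      (∀ n, x n = 0 ∨ x n = 1) → (∀ k n, y k n = 0 ∨ y k n = 1) →
      (XiInt E A b x y ℓ = ∅ ↔ XiRel E A b x y ℓ = ∅)) ∧
    kAdaptVal (XiInt (K := K) E A b) I groups W =
      kAdaptVal (XiRel (K := K) E A b) I groups W := by
  have key : ∀ (x : Fin N → ℝ) (y : Fin K → Fin N → ℝ) (ℓ : Fin K → Option (Fin N)),
      (∀ n, x n = 0 ∨ x n = 1) → (∀ k n, y k n = 0 ∨ y k n = 1) →
      ((XiInt E A b x y ℓ).Nonempty ↔ (XiRel E A b x y ℓ).Nonempty) := fun x y ℓ hx hy =>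
    XiInt_nonempty_iff_XiRel_nonempty hup
      (fun n => by rcases hx n with h | h <;> simp [h])
      fun k n => by rcases hy k n with h | h <;> simp [h]
  refine ⟨fun x y ℓ hx hy => ?_, kAdaptVal_congr_of_nonempty_iff key⟩
  simpa only [← Set.not_nonempty_iff_eq_empty, not_iff_not] using key x y ℓ hx hy

end
end
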